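/- Let W = (W_1,...,W_p) = w([X, X̃], y) be knockoff statistics satisfying the flip-sign property: for every S ⊆ {1,...,p}, w_j([X, X̃]_{swap(S)}, y) = -w_j([X, X̃], y) if j ∈ S and = w_j([X, X̃], y) otherwise. Suppose ([X,X̃]_{swap(S)}, y) =_d ([X,X̃], y) for every S ⊆ H_0. Let ε = (ε_1,...,ε_p) be independent random signs, independent of everything, with ε_j uniform on {±1} for j ∈ H_0 and ε_j = +1 for j ∉ H_0. Then ε ⊙ W =_d W (coordinatewise multiplication). In particular, conditional on |W|, the signs of the null statistics {W_j : j ∈ H_0} are i.i.d. uniform on {±1}. -/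

import Mathlib

/-!
Given `ε = e`, the vector `e ⊙ W` is, by the flip-sign property, the statistic computed on the
data swapped on `S = {j | e j = -1} ⊆ H₀`, and that data has the law of the original one by
null-swap exchangeability. As `ε` is independent of the data, the law of `ε ⊙ W` is a mixture of
copies of the law of `W`.
-/

open MeasureTheory ProbabilityTheory

/-- The swap operation: exchange the coordinate `inl j` (original) with `inr j` (knockoff)
for each `j ∈ S`. -/
def knockoffSwap {p : ℕ} (S : Finset (Fin p)) (v : (Fin p ⊕ Fin p) → ℝ) :
    (Fin p ⊕ Fin p) → ℝ :=
  Sum.elim (fun j => if j ∈ S then v (Sum.inr j) else v (Sum.inl j))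
    (fun j => if j ∈ S then v (Sum.inl j) else v (Sum.inr j))

theorem map_eq_of_indepFun_of_ae_map_eq {Ω α β γ : Type*} [MeasurableSpace Ω]
    [MeasurableSpace α] [MeasurableSpace β] [MeasurableSpace γ] {μ : Measure Ω}
    [IsProbabilityMeasure μ] {X : Ω → α} {Z : Ω → β} (hX : Measurable X) (hZ : Measurable Z)
    (hXZ : X ⟂ᵢ[μ] Z) {F : α → β → γ} (hF : Measurable (Function.uncurry F))
    {ρ : Measure γ} (h : ∀ᵐ ω ∂μ, (μ.map Z).map (F (X ω)) = ρ) :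
    μ.map (fun ω => F (X ω) (Z ω)) = ρ := by
  ext B hB
  have hFB : MeasurableSet (Function.uncurry F ⁻¹' B) := hF hB
  calc μ.map (fun ω => F (X ω) (Z ω)) B
      = μ.map (fun ω => (X ω, Z ω)) (Function.uncurry F ⁻¹' B) := by
        rw [Measure.map_apply (hX.prodMk hZ) hFB]
        exact Measure.map_apply (hF.comp (hX.prodMk hZ)) hB
    _ = ((μ.map X).prod (μ.map Z)) (Function.uncurry F ⁻¹' B) := by
        rw [(indepFun_iff_map_prod_eq_prod_map_map hX.aemeasurable hZ.aemeasurable).1 hXZ]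
    _ = ∫⁻ x, μ.map Z (F x ⁻¹' B) ∂(μ.map X) := Measure.prod_apply hFB
    _ = ∫⁻ ω, μ.map Z (F (X ω) ⁻¹' B) ∂μ :=
        lintegral_map (measurable_measure_prodMk_left hFB) hX
    _ = ∫⁻ _, ρ B ∂μ := lintegral_congr_ae <| h.mono fun ω hω => by
        rw [← hω, Measure.map_apply hF.of_uncurry_left hB]
    _ = ρ B := by simp

theorem ae_eq_or_eq_of_measure_add_eq_one {Ω α : Type*} [MeasurableSpace Ω]
    [MeasurableSpace α] [MeasurableSingletonClass α] {μ : Measure Ω} [IsProbabilityMeasure μ]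
    {ξ : Ω → α} (hξ : Measurable ξ) {a b : α} (hab : a ≠ b)
    (h : μ {ω | ξ ω = a} + μ {ω | ξ ω = b} = 1) : ∀ᵐ ω ∂μ, ξ ω = a ∨ ξ ω = b := by
  have hmeas : ∀ c, MeasurableSet {ω | ξ ω = c} := fun c => hξ (measurableSet_singleton c)
  have hdisj : Disjoint {ω | ξ ω = a} {ω | ξ ω = b} :=
    Set.disjoint_left.2 fun ω ha hb => hab (ha.symm.trans hb)
  rw [ae_iff_measure_eq (p := fun ω => ξ ω = a ∨ ξ ω = b)
    ((hmeas a).union (hmeas b)).nullMeasurableSet, measure_univ, Set.ofPred_or,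
    measure_union hdisj (hmeas b), h]

theorem measurable_knockoffSwap {p : ℕ} (S : Finset (Fin p)) :
    Measurable (knockoffSwap S) := by
  refine measurable_pi_lambda _ ?_
  rintro (j | j) <;> dsimp only [knockoffSwap, Sum.elim] <;> split <;>
    exact measurable_pi_apply _

def knockoffSwapData {p n : ℕ} (S : Finset (Fin p))
    (z : (Fin n → (Fin p ⊕ Fin p) → ℝ) × (Fin n → ℝ)) :
    (Fin n → (Fin p ⊕ Fin p) → ℝ) × (Fin n → ℝ) :=
  (fun i => knockoffSwap S (z.1 i), z.2)

theorem measurable_knockoffSwapData {p n : ℕ} (S : Finset (Fin p)) :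
    Measurable (knockoffSwapData (n := n) S) :=
  (measurable_pi_lambda _ fun i =>
    (measurable_knockoffSwap S).comp ((measurable_pi_apply i).comp measurable_fst)).prodMk
    measurable_snd

theorem map_sign_mul_knockoffStatistic_eq {p n : ℕ}
    (ρ : Measure ((Fin n → (Fin p ⊕ Fin p) → ℝ) × (Fin n → ℝ)))
    (w : (Fin n → (Fin p ⊕ Fin p) → ℝ) → (Fin n → ℝ) → Fin p → ℝ)
    (hw : Measurable fun z : (Fin n → (Fin p ⊕ Fin p) → ℝ) × (Fin n → ℝ) => w z.1 z.2)
    (hflip : ∀ (S : Finset (Fin p)) (M : Fin n → (Fin p ⊕ Fin p) → ℝ) (yv : Fin n → ℝ)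
      (j : Fin p), w (fun i => knockoffSwap S (M i)) yv j
        = if j ∈ S then -(w M yv j) else w M yv j)
    (H₀ : Finset (Fin p))
    (hexch : ∀ S : Finset (Fin p), S ⊆ H₀ → ρ.map (knockoffSwapData S) = ρ)
    (e : Fin p → ℝ) (he : ∀ j, e j = 1 ∨ (j ∈ H₀ ∧ e j = -1)) :
    ρ.map (fun z j => e j * w z.1 z.2 j) = ρ.map (fun z => w z.1 z.2) := by
  set S := H₀.filter (fun j => e j = -1)
  have hsign : (fun z : (Fin n → (Fin p ⊕ Fin p) → ℝ) × (Fin n → ℝ) =>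
      fun j => e j * w z.1 z.2 j) =
      (fun z => w z.1 z.2) ∘ knockoffSwapData S := by
    funext z j
    rw [Function.comp_apply, knockoffSwapData, hflip]
    rcases he j with hj | ⟨hjH, hj⟩
    · have hjS : j ∉ S := fun h => by
        have := (Finset.mem_filter.1 h).2
        norm_num [hj] at this
      rw [if_neg hjS, hj, one_mul]
    · rw [if_pos (Finset.mem_filter.2 ⟨hjH, hj⟩), hj, neg_one_mul]
  rw [hsign, ← Measure.map_map hw (measurable_knockoffSwapData S),
    hexch S (Finset.filter_subset _ _)]

theorem knockoff_statistics_sign_flip_general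
    {Ω : Type*} [MeasurableSpace Ω] {μ : Measure Ω} [IsProbabilityMeasure μ]
    {p n : ℕ} (D : Ω → Fin n → (Fin p ⊕ Fin p) → ℝ) (y : Ω → Fin n → ℝ)
    (hD : Measurable D) (hy : Measurable y)
    (w : (Fin n → (Fin p ⊕ Fin p) → ℝ) → (Fin n → ℝ) → Fin p → ℝ) (hw : Measurable ↿w)
    (hflip : ∀ (S : Finset (Fin p)) (M : Fin n → (Fin p ⊕ Fin p) → ℝ) (yv : Fin n → ℝ)
      (j : Fin p), w (fun i => knockoffSwap S (M i)) yv j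
        = if j ∈ S then -(w M yv j) else w M yv j)
    (H₀ : Finset (Fin p))
    (hexch : ∀ S : Finset (Fin p), S ⊆ H₀ →
      μ.map (fun ω => (fun i => knockoffSwap S (D ω i), y ω))
        = μ.map (fun ω => (D ω, y ω)))
    (ε : Ω → Fin p → ℝ) (hε : Measurable ε)
    (hεindep : IndepFun ε (fun ω => (D ω, y ω)) μ)
    (hεnull : ∀ j ∈ H₀, μ {ω | ε ω j = 1} = 1/2 ∧ μ {ω | ε ω j = -1} = 1/2)
    (hεnonnull : ∀ j ∉ H₀, ∀ ω, ε ω j = 1) :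
    μ.map (fun ω => fun j => ε ω j * w (D ω) (y ω) j)
      = μ.map (fun ω => w (D ω) (y ω)) := by
  have hZ : Measurable fun ω => (D ω, y ω) := hD.prodMk hy
  have hwZ : Measurable fun z : (Fin n → (Fin p ⊕ Fin p) → ℝ) × (Fin n → ℝ) => w z.1 z.2 :=
    measurable_pi_lambda _ fun j => hw.comp (measurable_fst.prodMk (measurable_snd.prodMk
      measurable_const))
  have hsigns : ∀ᵐ ω ∂μ, ∀ j, ε ω j = 1 ∨ (j ∈ H₀ ∧ ε ω j = -1) := by
    refine ae_all_iff.2 fun j => ?_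
    by_cases hj : j ∈ H₀
    · obtain ⟨h1, h2⟩ := hεnull j hj
      refine (ae_eq_or_eq_of_measure_add_eq_one ((measurable_pi_apply j).comp hε)
        (by norm_num) ?_).mono fun ω hω => hω.imp_right fun h => ⟨hj, h⟩
      rw [Function.comp_def, h1, h2, one_div, ENNReal.inv_two_add_inv_two]
    · exact ae_of_all _ fun ω => Or.inl (hεnonnull j hj ω)
  refine map_eq_of_indepFun_of_ae_map_eq hε hZ hεindep (F := fun e z j => e j * w z.1 z.2 j)
    ?_ (hsigns.mono fun ω hω => ?_)
  · exact measurable_pi_lambda _ fun j => ((measurable_pi_apply j).comp measurable_fst).mul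
      ((measurable_pi_apply j).comp (hwZ.comp measurable_snd))
  · refine (map_sign_mul_knockoffStatistic_eq _ w hwZ hflip H₀ (fun S hS => ?_) (ε ω) hω).trans
      (Measure.map_map hwZ hZ)
    rw [Measure.map_map (measurable_knockoffSwapData S) hZ]
    exact hexch S hS

/-- Sign-flip property of knockoff statistics: if `W = w([X, X̃], y)` obeys the flip-sign
property, the data obeys null-swap exchangeability, and `ε` is a vector of independent random
signs (uniform `±1` on nulls, `+1` off nulls) independent of the data, then `ε ⊙ W =_d W`. -/
theorem knockoff_statistics_sign_flip
    {Ω : Type*} [MeasurableSpace Ω] {μ : Measure Ω} [IsProbabilityMeasure μ]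
    {p n : ℕ} (D : Ω → Fin n → (Fin p ⊕ Fin p) → ℝ) (y : Ω → Fin n → ℝ)
    (hD : Measurable D) (hy : Measurable y)
    (w : (Fin n → (Fin p ⊕ Fin p) → ℝ) → (Fin n → ℝ) → Fin p → ℝ) (hw : Measurable ↿w)
    (hflip : ∀ (S : Finset (Fin p)) (M : Fin n → (Fin p ⊕ Fin p) → ℝ) (yv : Fin n → ℝ)
      (j : Fin p), w (fun i => knockoffSwap S (M i)) yv j
        = if j ∈ S then -(w M yv j) else w M yv j)
    (H₀ : Finset (Fin p))
    (hexch : ∀ S : Finset (Fin p), S ⊆ H₀ →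
      μ.map (fun ω => (fun i => knockoffSwap S (D ω i), y ω))
        = μ.map (fun ω => (D ω, y ω)))
    (ε : Ω → Fin p → ℝ) (hε : Measurable ε)
    (hεindep : IndepFun ε (fun ω => (D ω, y ω)) μ)
    (hεiid : iIndepFun (fun j ω => ε ω j) μ)
    (hεnull : ∀ j ∈ H₀, μ {ω | ε ω j = 1} = 1/2 ∧ μ {ω | ε ω j = -1} = 1/2)
    (hεnonnull : ∀ j ∉ H₀, ∀ ω, ε ω j = 1) :
    μ.map (fun ω => fun j => ε ω j * w (D ω) (y ω) j)
      = μ.map (fun ω => w (D ω) (y ω)) :=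
  knockoff_statistics_sign_flip_general D y hD hy w hw hflip H₀ hexch ε hε hεindep hεnull hεnonnull
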